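/- Define G_k(a,b,q) as the generating function of d_k. Then for all k ≥ 1: G_{(2k+2)_{ab}}(a,b,q) = G_{(2k+1)_b}(a,b,q) + a b q^{2k+2} G_{(2k)_a}(a,b,q) + a b² q^{4k+2} G_{(2k−1)_a}(a,b,q). -/

import Mathlib

/-- The five colours a, b, ab, a², b². -/
inductive Col where
  | a | b | ab | aa | bb
deriving DecidableEq, Inhabited

open Col

/-- Position of a coloured integer in the ordering
1_{ab} < 1_a < 1_{b²} < 1_b < 2_{ab} < 2_a < 3_{a²} < 2_b < 3_{ab} < ⋯ . -/
def colPos : ℕ × Col → ℕ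
  | (k, Col.ab) => 4 * k - 4
  | (k, Col.a)  => 4 * k - 3
  | (k, Col.bb) => 4 * k - 2
  | (k, Col.b)  => 4 * k - 1
  | (k, Col.aa) => 4 * k - 6

/-- Entry of the matrix A: minimal gap below a part of size `k` and colour `x`,
above a part of colour `y`. -/
def colMinGap (k : ℕ) (x y : Col) : ℕ :=
  match x, y with
  | Col.a, y => if k % 2 = 1 then
      (match y with | Col.ab => 1 | _ => 2)
    else
      (match y with | Col.aa => 3 | Col.bb => 3 | _ => 2)
  | Col.bb, y => (match y with | Col.b => 3 | Col.bb => 4 | _ => 2)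
  | Col.b, y => if k % 2 = 1 then
      (match y with | Col.a => 1 | Col.ab => 1 | _ => 2)
    else
      (match y with | Col.a => 1 | Col.ab => 1 | Col.aa => 1 | Col.bb => 3 | _ => 2)
  | Col.ab, y => if k % 2 = 0 then
      (match y with | Col.aa => 3 | Col.bb => 3 | _ => 2)
    else
      (match y with | Col.b => 3 | Col.bb => 3 | _ => 2)
  | Col.aa, y => (match y with | Col.aa => 4 | Col.bb => 4 | _ => 3)

/-- A coloured partition as in the non-dilated Siladić theorem: parts are coloured
positive integers, squared colours only occur on odd integers, there is no part
1_{ab} or 1_{b²}, and consecutive parts satisfy the gap conditions of matrix A. -/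
def IsColPartition (l : List (ℕ × Col)) : Prop :=
  (∀ p ∈ l, 1 ≤ p.1 ∧ ((p.2 = Col.aa ∨ p.2 = Col.bb) → p.1 % 2 = 1) ∧
    p ≠ (1, Col.ab) ∧ p ≠ (1, Col.bb)) ∧
  ∀ i, i + 1 < l.length →
    l[i]!.1 ≥ l[i+1]!.1 + colMinGap l[i]!.1 l[i]!.2 l[i+1]!.2

/-- Number of parts coloured a or ab, plus twice the number of parts coloured a². -/
def aCt (l : List (ℕ × Col)) : ℕ :=
  (l.countP fun p => p.2 == Col.a || p.2 == Col.ab) +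
    2 * (l.countP fun p => p.2 == Col.aa)

/-- Number of parts coloured b or ab, plus twice the number of parts coloured b². -/
def bCt (l : List (ℕ × Col)) : ℕ :=
  (l.countP fun p => p.2 == Col.b || p.2 == Col.ab) +
    2 * (l.countP fun p => p.2 == Col.bb)

/-- D(u,v,n): coloured partitions of n with a-count u and b-count v. -/
noncomputable def Dct (u v n : ℕ) : ℕ :=
  Nat.card {l : List (ℕ × Col) // IsColPartition l ∧
    (l.map Prod.fst).sum = n ∧ aCt l = u ∧ bCt l = v}

/-- d_K(u,v,n): as D(u,v,n) but with largest part at most K in the coloured order;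
integer arguments (negative values give 0). -/
noncomputable def dct (K : ℕ × Col) (u v n : ℤ) : ℕ :=
  Nat.card {l : List (ℕ × Col) // IsColPartition l ∧
    (∀ p ∈ l, colPos p ≤ colPos K) ∧
    ((l.map Prod.fst).sum : ℤ) = n ∧ (aCt l : ℤ) = u ∧ (bCt l : ℤ) = v}

/-- e_K(u,v,n): as d_K(u,v,n) but with largest part exactly K. -/
noncomputable def ect (K : ℕ × Col) (u v n : ℤ) : ℕ :=
  Nat.card {l : List (ℕ × Col) // IsColPartition l ∧
    (∀ p ∈ l, colPos p ≤ colPos K) ∧ l ≠ [] ∧ l.head! = K ∧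
    ((l.map Prod.fst).sum : ℤ) = n ∧ (aCt l : ℤ) = u ∧ (bCt l : ℤ) = v}

/-- The generating function G_K(a,b,q) = 1 + ∑_{u,v≥0,n≥1} d_K(u,v,n) aᵘbᵛqⁿ,
as a formal power series in the variables a = X 0, b = X 1, q = X 2. -/
noncomputable def Gf (K : ℕ × Col) : MvPowerSeries (Fin 3) ℚ :=
  fun e => (dct K (e 0) (e 1) (e 2) : ℚ)

/-!
Sort the partitions counted by `G_{(2k+2)_{ab}}` by their first parts. If the largest part is
not `(2k+2)_{ab}`, it is at most `(2k+1)_b`, its predecessor in the order. Otherwise the row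
`ab_even` of `A` forces the second part to be at most `(2k)_a` or to equal `(2k)_b`, and in the
latter case the row `b_even` forces the third part to be at most `(2k-1)_a`. Removing the
parts `(2k+2)_{ab}`, resp. `(2k+2)_{ab}, (2k)_b`, is a bijection onto the partitions counted by
`G_{(2k)_a}`, resp. `G_{(2k-1)_a}`, and the removed parts have weight `abq^{2k+2}`, resp.
`ab²q^{4k+2}`.
-/

def IsColPart (p : ℕ × Col) : Prop :=
  1 ≤ p.1 ∧ ((p.2 = aa ∨ p.2 = bb) → p.1 % 2 = 1) ∧ p ≠ (1, ab) ∧ p ≠ (1, bb)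

def CanPrecede (p q : ℕ × Col) : Prop :=
  q.1 + colMinGap p.1 p.2 q.2 ≤ p.1

lemma isColPartition_cons {p : ℕ × Col} {l : List (ℕ × Col)} :
    IsColPartition (p :: l) ↔
      IsColPart p ∧ IsColPartition l ∧ ∀ q ∈ l.head?, CanPrecede p q := by
  cases l with
  | nil => simp [IsColPartition, IsColPart]
  | cons q t =>
    simp only [IsColPartition, List.forall_mem_cons, List.length_cons,
      List.getElem!_eq_getElem?_getD, List.getElem?_cons_succ]
    rw [← Nat.and_forall_add_one]
    simp only [List.getElem?_cons_zero, List.getElem?_cons_succ, Option.getD_some,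
      Nat.add_lt_add_iff_right, Nat.zero_lt_succ, true_implies, ge_iff_le,
      List.head?_cons, Option.mem_def, Option.some.injEq, forall_eq', IsColPart, CanPrecede]
    tauto

lemma IsColPartition.isColPart_of_mem {l : List (ℕ × Col)} (h : IsColPartition l)
    {p : ℕ × Col} (hp : p ∈ l) : IsColPart p :=
  h.1 p hp

lemma IsColPartition.forall_head?_congr {l : List (ℕ × Col)} (h : IsColPartition l)
    {P Q : ℕ × Col → Prop} (hPQ : ∀ q, IsColPart q → (P q ↔ Q q)) :
    (∀ q ∈ l.head?, P q) ↔ ∀ q ∈ l.head?, Q q :=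
  forall₂_congr fun q hq => hPQ q (h.isColPart_of_mem (List.mem_of_mem_head? hq))

lemma colPos_lt_of_canPrecede {p q : ℕ × Col} (hp : IsColPart p) (hq : IsColPart q)
    (h : CanPrecede p q) : colPos q < colPos p := by
  obtain ⟨m, c⟩ := p
  obtain ⟨m', c'⟩ := q
  obtain ⟨hm, hpar, -, -⟩ := hp
  obtain ⟨hm', hpar', -, -⟩ := hq
  unfold CanPrecede colMinGap at h
  cases c <;> cases c' <;> simp [colPos] at h hpar hpar' ⊢ <;>
    (try split_ifs at h) <;> omega

lemma IsColPartition.colPos_lt_of_mem_tail {p : ℕ × Col} {l : List (ℕ × Col)}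
    (h : IsColPartition (p :: l)) {x : ℕ × Col} (hx : x ∈ l) : colPos x < colPos p := by
  induction l generalizing p with
  | nil => simp at hx
  | cons q t ih =>
    obtain ⟨hp, ht, hgap⟩ := isColPartition_cons.1 h
    have hq : colPos q < colPos p :=
      colPos_lt_of_canPrecede hp (ht.isColPart_of_mem List.mem_cons_self) (hgap q rfl)
    rcases List.mem_cons.1 hx with rfl | hx
    · exact hq
    · exact (ih ht hx).trans hq

lemma IsColPartition.forall_colPos_le_iff {l : List (ℕ × Col)} (h : IsColPartition l) (C : ℕ) :
    (∀ x ∈ l, colPos x ≤ C) ↔ ∀ q ∈ l.head?, colPos q ≤ C := by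
  cases l with
  | nil => simp
  | cons p t =>
    simp only [List.forall_mem_cons, List.head?_cons, Option.mem_def, Option.some.injEq,
      forall_eq']
    exact ⟨And.left, fun hp =>
      ⟨hp, fun x hx => ((h.colPos_lt_of_mem_tail hx).trans_le hp).le⟩⟩

instance : Fintype Col := ⟨{a, b, ab, aa, bb}, fun x => by cases x <;> simp⟩

lemma finite_setOf_sum_eq (n : ℕ) :
    {l : List (ℕ × Col) | (∀ p ∈ l, 1 ≤ p.1) ∧ (l.map Prod.fst).sum = n}.Finite := by
  have : Finite {p : ℕ × Col // p.1 ≤ n} :=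
    (((Set.finite_Iic n).prod Set.finite_univ).subset fun p hp => ⟨hp, trivial⟩).to_subtype
  refine ((List.finite_length_le {p : ℕ × Col // p.1 ≤ n} n).image
    (List.map Subtype.val)).subset ?_
  rintro l ⟨hpos, hsum⟩
  have hlen : l.length ≤ n := by
    simpa [hsum] using List.length_le_sum_of_one_le (l.map Prod.fst) (by simpa using hpos)
  lift l to List {p : ℕ × Col // p.1 ≤ n} using
    fun p hp => hsum ▸ List.le_sum_of_mem (List.mem_map_of_mem hp)
  exact ⟨l, by simpa using hlen, rfl⟩

def HasWeight (l : List (ℕ × Col)) (u v n : ℤ) : Prop :=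
  ((l.map Prod.fst).sum : ℤ) = n ∧ (aCt l : ℤ) = u ∧ (bCt l : ℤ) = v

lemma hasWeight_cons {p : ℕ × Col} {l : List (ℕ × Col)} {u v n : ℤ} :
    HasWeight (p :: l) u v n ↔ HasWeight l (u - aCt [p]) (v - bCt [p]) (n - p.1) := by
  simp only [HasWeight, aCt, bCt, List.map_cons, List.sum_cons, List.countP_cons,
    List.countP_nil]
  push_cast
  omega

def colPartitionsLE (K : ℕ × Col) (u v n : ℤ) : Set (List (ℕ × Col)) :=
  {l | IsColPartition l ∧ (∀ p ∈ l, colPos p ≤ colPos K) ∧ HasWeight l u v n}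

lemma dct_eq_ncard (K : ℕ × Col) (u v n : ℤ) : dct K u v n = (colPartitionsLE K u v n).ncard :=
  rfl

lemma colPartitionsLE_finite (K : ℕ × Col) (u v n : ℤ) : (colPartitionsLE K u v n).Finite :=
  (finite_setOf_sum_eq n.toNat).subset fun l ⟨hl, _, hn, _⟩ =>
    ⟨fun p hp => (hl.isColPart_of_mem hp).1, by omega⟩

lemma dct_eq_zero_of_neg {K : ℕ × Col} {u v n : ℤ} (h : u < 0 ∨ v < 0 ∨ n < 0) :
    dct K u v n = 0 := by
  have : colPartitionsLE K u v n = ∅ :=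
    Set.eq_empty_of_forall_notMem fun l ⟨_, _, hn, hu, hv⟩ => by omega
  rw [dct_eq_ncard, this, Set.ncard_empty]

lemma mem_colPartitionsLE {K : ℕ × Col} {u v n : ℤ} {l : List (ℕ × Col)} :
    l ∈ colPartitionsLE K u v n ↔
      IsColPartition l ∧ (∀ q ∈ l.head?, colPos q ≤ colPos K) ∧ HasWeight l u v n :=
  and_congr_right fun hl => by rw [hl.forall_colPos_le_iff]

lemma cons_mem_colPartitionsLE {K p : ℕ × Col} {u v n : ℤ} {t : List (ℕ × Col)} :
    p :: t ∈ colPartitionsLE K u v n ↔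
      colPos p ≤ colPos K ∧ IsColPart p ∧ (∀ q ∈ t.head?, CanPrecede p q) ∧
        IsColPartition t ∧ HasWeight t (u - aCt [p]) (v - bCt [p]) (n - p.1) := by
  rw [mem_colPartitionsLE, isColPartition_cons, hasWeight_cons]
  simp only [List.head?_cons, Option.mem_def, Option.some.injEq, forall_eq']
  tauto

section

variable {k : ℕ}

lemma isColPart_ab : IsColPart (2*k+2, ab) :=
  ⟨by omega, by simp, by simp, by simp⟩

lemma isColPart_b (hk : 1 ≤ k) : IsColPart (2*k, b) :=
  ⟨by omega, by simp, by simp, by simp⟩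

lemma colPos_le_ab_iff {p : ℕ × Col} (hp : IsColPart p) :
    colPos p ≤ colPos (2*k+2, ab) ↔ colPos p ≤ colPos (2*k+1, b) ∨ p = (2*k+2, ab) := by
  obtain ⟨m, c⟩ := p
  obtain ⟨hm, hpar, -, -⟩ := hp
  cases c <;> simp [colPos, Prod.ext_iff] at hpar ⊢ <;> omega

lemma canPrecede_ab_iff (hk : 1 ≤ k) {q : ℕ × Col} (hq : IsColPart q) :
    CanPrecede (2*k+2, ab) q ↔ colPos q ≤ colPos (2*k, a) ∨ q = (2*k, b) := by
  obtain ⟨m, c⟩ := q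
  obtain ⟨hm, hpar, -, -⟩ := hq
  have heven : (2*k+2) % 2 = 0 := by omega
  unfold CanPrecede colMinGap
  cases c <;> simp [colPos, heven, Prod.ext_iff] at hpar ⊢ <;> omega

lemma canPrecede_b_iff (hk : 1 ≤ k) {q : ℕ × Col} (hq : IsColPart q) :
    CanPrecede (2*k, b) q ↔ colPos q ≤ colPos (2*k-1, a) := by
  obtain ⟨m, c⟩ := q
  obtain ⟨hm, hpar, -, -⟩ := hq
  have heven : (2*k) % 2 = 0 := by omega
  unfold CanPrecede colMinGap
  cases c <;> simp [colPos, heven] at hpar ⊢ <;> omega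

lemma mem_colPartitionsLE_b_iff {u v n : ℤ} {l : List (ℕ × Col)} :
    l ∈ colPartitionsLE (2*k+1, b) u v n ↔
      l ∈ colPartitionsLE (2*k+2, ab) u v n ∧ l.head? ≠ some (2*k+2, ab) := by
  rcases l with _ | ⟨p, t⟩
  · simp [mem_colPartitionsLE]
  · rw [cons_mem_colPartitionsLE, cons_mem_colPartitionsLE]
    simp only [List.head?_cons, ne_eq, Option.some.injEq]
    constructor
    · rintro ⟨hp, hpc, rest⟩
      refine ⟨⟨(colPos_le_ab_iff hpc).2 (Or.inl hp), hpc, rest⟩, ?_⟩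
      rintro rfl
      simp only [colPos] at hp
      omega
    · rintro ⟨⟨hp, hpc, rest⟩, hne⟩
      exact ⟨((colPos_le_ab_iff hpc).1 hp).resolve_right hne, hpc, rest⟩

lemma cons_ab_mem_colPartitionsLE_iff (hk : 1 ≤ k) {u v n : ℤ} {t : List (ℕ × Col)} :
    ((2*k+2, ab) :: t ∈ colPartitionsLE (2*k+2, ab) u v n ∧ t.head? ≠ some (2*k, b)) ↔
      t ∈ colPartitionsLE (2*k, a) (u-1) (v-1) (n-(2*k+2)) := by
  rw [cons_mem_colPartitionsLE, mem_colPartitionsLE]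
  simp only [show aCt [(2*k+2, ab)] = 1 from rfl, show bCt [(2*k+2, ab)] = 1 from rfl]
  push_cast
  constructor
  · rintro ⟨⟨-, -, hgap, ht, hw⟩, hne⟩
    refine ⟨ht, fun q hq => ?_, hw⟩
    rcases (canPrecede_ab_iff hk (ht.isColPart_of_mem (List.mem_of_mem_head? hq))).1
      (hgap q hq) with h | rfl
    · exact h
    · exact absurd hq hne
  · rintro ⟨ht, hbound, hw⟩
    refine ⟨⟨le_rfl, isColPart_ab, fun q hq =>
      (canPrecede_ab_iff hk (ht.isColPart_of_mem (List.mem_of_mem_head? hq))).2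
        (Or.inl (hbound q hq)), ht, hw⟩, fun hq => ?_⟩
    have := hbound _ hq
    simp only [colPos] at this
    omega

lemma cons_ab_cons_b_mem_colPartitionsLE_iff (hk : 1 ≤ k) {u v n : ℤ} {s : List (ℕ × Col)} :
    (2*k+2, ab) :: (2*k, b) :: s ∈ colPartitionsLE (2*k+2, ab) u v n ↔
      s ∈ colPartitionsLE (2*k-1, a) (u-1) (v-2) (n-(4*k+2)) := by
  rw [cons_mem_colPartitionsLE, isColPartition_cons, hasWeight_cons, mem_colPartitionsLE]
  simp only [show aCt [(2*k+2, ab)] = 1 from rfl, show bCt [(2*k+2, ab)] = 1 from rfl,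
    show aCt [(2*k, b)] = 0 from rfl, show bCt [(2*k, b)] = 1 from rfl]
  push_cast
  rw [show u - 1 - 0 = u - 1 by ring, show v - 1 - 1 = v - 2 by ring,
    show n - (2*k+2) - 2*k = n - (4*k+2) by ring]
  have hgap : CanPrecede (2*k+2, ab) (2*k, b) :=
    (canPrecede_ab_iff hk (isColPart_b hk)).2 (Or.inr rfl)
  simp only [le_refl, isColPart_ab, isColPart_b hk, List.head?_cons, Option.mem_def,
    Option.some.injEq, forall_eq', hgap, true_and, and_assoc]
  exact and_congr_right fun hs =>
    and_congr_left' (hs.forall_head?_congr fun q hq => canPrecede_b_iff hk hq)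

lemma colPartitionsLE_ab_eq (hk : 1 ≤ k) (u v n : ℤ) :
    colPartitionsLE (2*k+2, ab) u v n =
      colPartitionsLE (2*k+1, b) u v n ∪
        List.cons (2*k+2, ab) '' colPartitionsLE (2*k, a) (u-1) (v-1) (n-(2*k+2)) ∪
        (List.cons (2*k+2, ab) ∘ List.cons (2*k, b)) ''
          colPartitionsLE (2*k-1, a) (u-1) (v-2) (n-(4*k+2)) := by
  ext l
  simp only [Set.mem_union, Set.mem_image]
  constructor
  · intro hl
    by_cases hhead : l.head? = some (2*k+2, ab)
    · obtain ⟨t, rfl⟩ : ∃ t, l = (2*k+2, ab) :: t :=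
        ⟨_, (List.cons_head?_tail hhead).symm⟩
      by_cases hsecond : t.head? = some (2*k, b)
      · obtain ⟨s, rfl⟩ : ∃ s, t = (2*k, b) :: s :=
          ⟨_, (List.cons_head?_tail hsecond).symm⟩
        exact Or.inr ⟨s, (cons_ab_cons_b_mem_colPartitionsLE_iff hk).1 hl, rfl⟩
      · exact Or.inl <| Or.inr
          ⟨t, (cons_ab_mem_colPartitionsLE_iff hk).1 ⟨hl, hsecond⟩, rfl⟩
    · exact Or.inl (Or.inl (mem_colPartitionsLE_b_iff.2 ⟨hl, hhead⟩))
  · rintro ((hl | ⟨t, ht, rfl⟩) | ⟨s, hs, rfl⟩)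
    · exact (mem_colPartitionsLE_b_iff.1 hl).1
    · exact ((cons_ab_mem_colPartitionsLE_iff hk).2 ht).1
    · exact (cons_ab_cons_b_mem_colPartitionsLE_iff hk).2 hs

lemma dct_ab_eq (hk : 1 ≤ k) (u v n : ℤ) :
    dct (2*k+2, ab) u v n =
      dct (2*k+1, b) u v n + dct (2*k, a) (u-1) (v-1) (n-(2*k+2)) +
        dct (2*k-1, a) (u-1) (v-2) (n-(4*k+2)) := by
  have hb_ab : Disjoint (colPartitionsLE (2*k+1, b) u v n)
      (List.cons (2*k+2, ab) '' colPartitionsLE (2*k, a) (u-1) (v-1) (n-(2*k+2))) := by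
    rw [Set.disjoint_left]
    rintro l hl ⟨t, -, rfl⟩
    exact (mem_colPartitionsLE_b_iff.1 hl).2 rfl
  have hb_abb : Disjoint (colPartitionsLE (2*k+1, b) u v n)
      ((List.cons (2*k+2, ab) ∘ List.cons (2*k, b)) ''
        colPartitionsLE (2*k-1, a) (u-1) (v-2) (n-(4*k+2))) := by
    rw [Set.disjoint_left]
    rintro l hl ⟨s, -, rfl⟩
    exact (mem_colPartitionsLE_b_iff.1 hl).2 rfl
  have hab_abb : Disjoint
      (List.cons (2*k+2, ab) '' colPartitionsLE (2*k, a) (u-1) (v-1) (n-(2*k+2)))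
      ((List.cons (2*k+2, ab) ∘ List.cons (2*k, b)) ''
        colPartitionsLE (2*k-1, a) (u-1) (v-2) (n-(4*k+2))) := by
    rw [Set.disjoint_left]
    rintro l ⟨t, ht, rfl⟩ ⟨s, -, hts⟩
    obtain ⟨-, rfl⟩ := List.cons_eq_cons.1 hts
    exact ((cons_ab_mem_colPartitionsLE_iff hk).2 ht).2 rfl
  simp only [dct_eq_ncard]
  rw [colPartitionsLE_ab_eq hk,
    Set.ncard_union_eq (Set.disjoint_union_left.2 ⟨hb_abb, hab_abb⟩)
      ((colPartitionsLE_finite _ _ _ _).union ((colPartitionsLE_finite _ _ _ _).image _))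
      ((colPartitionsLE_finite _ _ _ _).image _),
    Set.ncard_union_eq hb_ab (colPartitionsLE_finite _ _ _ _)
      ((colPartitionsLE_finite _ _ _ _).image _),
    Set.ncard_image_of_injective _ List.cons_injective,
    Set.ncard_image_of_injective _ (List.cons_injective.comp List.cons_injective)]

end

section PowerSeries

open MvPowerSeries Finsupp

lemma coeff_Gf (K : ℕ × Col) (e : Fin 3 →₀ ℕ) :
    coeff e (Gf K) = (dct K (e 0) (e 1) (e 2) : ℚ) :=
  rfl

lemma X_pow_mul_X_pow_mul_X_pow (a b m : ℕ) :
    (X 0 ^ a * X 1 ^ b * X 2 ^ m : MvPowerSeries (Fin 3) ℚ) =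
      monomial (single 0 a + single 1 b + single 2 m) 1 := by
  simp only [X_pow_eq, monomial_mul_monomial, one_mul]

lemma coeff_X_pow_mul_Gf (K : ℕ × Col) (a b m : ℕ) (e : Fin 3 →₀ ℕ) :
    coeff e ((X 0 ^ a * X 1 ^ b * X 2 ^ m : MvPowerSeries (Fin 3) ℚ) * Gf K) =
      dct K ((e 0 : ℤ) - a) ((e 1 : ℤ) - b) ((e 2 : ℤ) - m) := by
  rw [X_pow_mul_X_pow_mul_X_pow, coeff_monomial_mul]
  split_ifs with h
  · obtain ⟨ha, hb, hm⟩ : a ≤ e 0 ∧ b ≤ e 1 ∧ m ≤ e 2 := by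
      simpa [Finsupp.le_def, Fin.forall_fin_succ] using h
    rw [one_mul, coeff_Gf]
    simp [ha, hb, hm]
  · have hneg : e 0 < a ∨ e 1 < b ∨ e 2 < m := by
      simpa [Finsupp.le_def, Fin.exists_fin_succ] using h
    rw [dct_eq_zero_of_neg (by omega), Nat.cast_zero]

end PowerSeries

open MvPowerSeries in
/-- q-difference equation (3.13): G_{(2k+2)_{ab}} = G_{(2k+1)_b}
+ abq^{2k+2} G_{(2k)_a} + ab²q^{4k+2} G_{(2k-1)_a}. -/
theorem qdiff_eq5 (k : ℕ) (hk : 1 ≤ k) :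
    Gf (2*k+2, Col.ab) =
      Gf (2*k+1, Col.b) +
      (X 0 * X 1 * X 2 ^ (2*k+2) : MvPowerSeries (Fin 3) ℚ) * Gf (2*k, Col.a) +
      (X 0 * X 1 ^ 2 * X 2 ^ (4*k+2) : MvPowerSeries (Fin 3) ℚ) * Gf (2*k-1, Col.a) := by
  ext e
  have hab := coeff_X_pow_mul_Gf (2*k, a) 1 1 (2*k+2) e
  have habb := coeff_X_pow_mul_Gf (2*k-1, a) 1 2 (4*k+2) e
  rw [pow_one, pow_one] at hab
  rw [pow_one] at habb
  rw [map_add, map_add, hab, habb, coeff_Gf, coeff_Gf, dct_ab_eq hk]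
  push_cast
  ring
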